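/- Let (z₁,y₁),…,(z_m,y_m) with z₁ ≤ … ≤ z_m be input to LPAV, producing fitted values ŷ₁,…,ŷ_m (the minimizer of ∑(ŷᵢ-yᵢ)² subject to ŷᵢ₊₁-ŷᵢ ≥ 0 and ŷᵢ₊₁-ŷᵢ ≤ zᵢ₊₁-zᵢ). Let f: ℝ → ℝ satisfy f(β) - f(α) ≥ β - α for all β ≥ α. Then ∑ᵢ₌₁^m (yᵢ - ŷᵢ)(f(ŷᵢ) - zᵢ) ≥ 0. -/

import Mathlib

/-!
Write `r i = y i - ŷ i`, `g i = f (ŷ i) - z i` and `σ k = ∑_{j ≥ k} r j`. Abel summation gives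
`∑ r i g i = σ 0 g 0 + ∑_{k ≥ 1} σ k (g k - g (k-1))`. Shifting all of `ŷ`, or its tail from `k` on,
by a small amount keeps it feasible unless the constraint between `k-1` and `k` is tight, so
first-order optimality gives `σ 0 = 0`, `σ k ≥ 0` when `ŷ (k-1) < ŷ k`, and `σ k ≤ 0` when
`ŷ k - ŷ (k-1) < z k - z (k-1)`. Since `f` is expansive, `g k - g (k-1) ≥ 0` when the upper
constraint is tight and `g k - g (k-1) ≤ 0` when `ŷ (k-1) = ŷ k`, so every term is nonnegative.
-/

open Finset Filter Topology

theorem IsMinOn.sum_mul_sub_nonpos_of_add_smul_mem {ι : Type*} [Fintype ι] {y a d : ι → ℝ}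
    {s : Set (ι → ℝ)} {ε : ℝ} (hmin : IsMinOn (fun v => ∑ i, (v i - y i) ^ 2) s a)
    (hε : 0 < ε) (hs : ∀ t ∈ Set.Ioc 0 ε, a + t • d ∈ s) :
    ∑ i, d i * (y i - a i) ≤ 0 := by
  set D := ∑ i, d i ^ 2
  have hsmall : ∀ t ∈ Set.Ioc 0 ε, 2 * ∑ i, d i * (y i - a i) ≤ t * D := by
    intro t ht
    have hle := isMinOn_iff.1 hmin _ (hs t ht)
    have hexpand : ∑ i, ((a + t • d) i - y i) ^ 2
        = ∑ i, (a i - y i) ^ 2 - t * (2 * ∑ i, d i * (y i - a i) - t * D) := by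
      simp only [D, Pi.add_apply, Pi.smul_apply, smul_eq_mul, mul_sum, ← sum_sub_distrib]
      exact sum_congr rfl fun i _ => by ring
    rw [hexpand] at hle
    nlinarith [ht.1]
  have hlim : Tendsto (fun t => t * D) (𝓝[>] 0) (𝓝 0) := by
    have hcont : Continuous fun t : ℝ => t * D := continuous_id.mul continuous_const
    exact (hcont.tendsto' 0 0 (zero_mul D)).mono_left nhdsWithin_le_nhds
  have := ge_of_tendsto hlim (eventually_of_mem (Ioc_mem_nhdsGT hε) hsmall)
  linarith

theorem Fin.castSucc_covBy_succ {n : ℕ} (k : Fin n) : k.castSucc ⋖ k.succ :=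
  ⟨Fin.castSucc_lt_succ, fun c h₁ h₂ => by
    simp only [Fin.lt_def, Fin.val_succ, Fin.val_castSucc] at h₁ h₂; omega⟩

theorem Fin.sum_filter_succ_le {M : Type*} [AddCommMonoid M] {n : ℕ} (k : Fin n)
    (r : Fin (n + 1) → M) : ∑ i with k.succ ≤ i, r i = ∑ i with k ≤ i, r i.succ := by
  simp [sum_filter, Fin.sum_univ_succ, Fin.succ_le_succ_iff]

theorem Fin.sum_mul_by_parts {R : Type*} [CommRing R] :
    ∀ {n : ℕ} (r g : Fin (n + 1) → R), ∑ i, r i * g i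
      = (∑ i, r i) * g 0 + ∑ k : Fin n, (∑ i with k.succ ≤ i, r i) * (g k.succ - g k.castSucc)
  | 0, r, g => by simp
  | n + 1, r, g => by
    have ih := Fin.sum_mul_by_parts (r ∘ Fin.succ) (g ∘ Fin.succ)
    simp only [Function.comp_apply] at ih
    rw [Fin.sum_univ_succ, ih, Fin.sum_univ_succ (fun k : Fin (n + 1) => _ * _),
      Fin.sum_univ_succ (fun i => r i)]
    simp only [Fin.sum_filter_succ_le, Fin.zero_le, filter_true, Fin.succ_castSucc,
      Fin.castSucc_zero]
    ring

def LPAVFeasible {ι : Type*} [Preorder ι] (z v : ι → ℝ) : Prop :=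
  ∀ i j, i ≤ j → v i ≤ v j ∧ v j - v i ≤ z j - z i

def IsLPAVFit {ι : Type*} [Fintype ι] [Preorder ι] (z y a : ι → ℝ) : Prop :=
  LPAVFeasible z a ∧ IsMinOn (fun v => ∑ i, (v i - y i) ^ 2) {v | LPAVFeasible z v} a

namespace LPAVFeasible

variable {ι : Type*} [LinearOrder ι] {z v : ι → ℝ}

theorem add_const (hv : LPAVFeasible z v) (t : ℝ) : LPAVFeasible z (v + t • 1) := by
  intro i j hij
  simp only [Pi.add_apply, Pi.smul_apply, Pi.one_apply, smul_eq_mul, mul_one]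
  obtain ⟨hmono, hlip⟩ := hv i j hij
  constructor <;> linarith

/-- Only the differences across the gap `p ⋖ k` move. -/
theorem add_smul_indicator_Ici (hv : LPAVFeasible z v) {p k : ι} (hpk : p ⋖ k) {t : ℝ}
    (hgap : -(v k - v p) ≤ t) (hslack : t ≤ (z k - z p) - (v k - v p)) :
    LPAVFeasible z (v + t • (Set.Ici k).indicator 1) := by
  intro i j hij
  simp only [Pi.add_apply, Pi.smul_apply, Set.indicator_apply, Set.mem_Ici, Pi.one_apply,
    smul_eq_mul, mul_ite, mul_one, mul_zero]
  obtain ⟨hmono, hlip⟩ := hv i j hij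
  by_cases hki : k ≤ i
  · simp only [hki, hki.trans hij, if_true]
    constructor <;> linarith
  by_cases hkj : k ≤ j
  · obtain ⟨hmono₁, hlip₁⟩ := hv i p (hpk.le_of_lt (not_le.1 hki))
    obtain ⟨hmono₂, hlip₂⟩ := hv k j hkj
    simp only [hki, hkj, if_true, if_false]
    constructor <;> linarith
  · simp only [hki, hkj, if_false]
    constructor <;> linarith

end LPAVFeasible

theorem sum_indicator_Ici_mul {ι : Type*} [Fintype ι] [LinearOrder ι] (k : ι) (r : ι → ℝ) :
    ∑ i, (Set.Ici k).indicator 1 i * r i = ∑ i with k ≤ i, r i := by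
  simp [Set.indicator_apply, sum_filter]

namespace IsLPAVFit

variable {ι : Type*} [Fintype ι] [LinearOrder ι] {z y a : ι → ℝ}

theorem sum_sub_eq_zero (ha : IsLPAVFit z y a) : ∑ i, (y i - a i) = 0 := by
  have hup := ha.2.sum_mul_sub_nonpos_of_add_smul_mem (d := 1) one_pos
    fun t _ => ha.1.add_const t
  have hdown := ha.2.sum_mul_sub_nonpos_of_add_smul_mem (d := -1) one_pos
    fun t _ => by rw [smul_neg, ← neg_smul]; exact ha.1.add_const (-t)
  simp only [Pi.one_apply, Pi.neg_apply, one_mul, neg_one_mul, sum_neg_distrib] at hup hdown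
  linarith

theorem sum_filter_le_sub_nonpos (ha : IsLPAVFit z y a) {p k : ι} (hpk : p ⋖ k)
    (hslack : a k - a p < z k - z p) : ∑ i with k ≤ i, (y i - a i) ≤ 0 := by
  rw [← sum_indicator_Ici_mul]
  refine ha.2.sum_mul_sub_nonpos_of_add_smul_mem (sub_pos.2 hslack) fun t ht => ?_
  exact ha.1.add_smul_indicator_Ici hpk (by linarith [(ha.1 p k hpk.le).1, ht.1]) ht.2

theorem sum_filter_le_sub_nonneg (ha : IsLPAVFit z y a) {p k : ι} (hpk : p ⋖ k)
    (hgap : a p < a k) : 0 ≤ ∑ i with k ≤ i, (y i - a i) := by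
  rw [← neg_nonpos, ← sum_indicator_Ici_mul, ← sum_neg_distrib]
  have := ha.2.sum_mul_sub_nonpos_of_add_smul_mem (d := -(Set.Ici k).indicator 1)
    (sub_pos.2 hgap) fun t ht => by
      rw [smul_neg, ← neg_smul]
      exact ha.1.add_smul_indicator_Ici hpk (by linarith [ht.2])
        (by linarith [(ha.1 p k hpk.le).2, ht.1])
  simpa only [Pi.neg_apply, neg_mul] using this

theorem sum_filter_le_sub_mul_sub_nonneg (ha : IsLPAVFit z y a) {p k : ι} (hpk : p ⋖ k)
    {f : ℝ → ℝ} (hf : ∀ α β : ℝ, α ≤ β → β - α ≤ f β - f α) :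
    0 ≤ (∑ i with k ≤ i, (y i - a i)) * ((f (a k) - z k) - (f (a p) - z p)) := by
  obtain ⟨hmono, hlip⟩ := ha.1 p k hpk.le
  rcases hmono.lt_or_eq with hgap | hflat
  · have hσ := ha.sum_filter_le_sub_nonneg hpk hgap
    rcases hlip.lt_or_eq with hslack | htight
    · rw [le_antisymm (ha.sum_filter_le_sub_nonpos hpk hslack) hσ, zero_mul]
    · exact mul_nonneg hσ (by linarith [hf _ _ hmono])
  · rw [hflat] at hlip ⊢
    rcases hlip.lt_or_eq with hslack | htight
    · exact mul_nonneg_of_nonpos_of_nonpos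
        (ha.sum_filter_le_sub_nonpos hpk (by rwa [hflat])) (by linarith)
    · rw [show f (a k) - z k - (f (a k) - z p) = 0 by linarith, mul_zero]

end IsLPAVFit

theorem stmt4_general {m : ℕ} (z y yhat : Fin m → ℝ)
    (hfeas : ∀ i j : Fin m, i ≤ j → yhat i ≤ yhat j ∧ yhat j - yhat i ≤ z j - z i)
    (hmin : ∀ v : Fin m → ℝ,
      (∀ i j : Fin m, i ≤ j → v i ≤ v j ∧ v j - v i ≤ z j - z i) →
      ∑ i, (yhat i - y i) ^ 2 ≤ ∑ i, (v i - y i) ^ 2)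
    (f : ℝ → ℝ) (hf : ∀ α β : ℝ, α ≤ β → β - α ≤ f β - f α) :
    0 ≤ ∑ i, (y i - yhat i) * (f (yhat i) - z i) := by
  have hfit : IsLPAVFit z y yhat := ⟨hfeas, isMinOn_iff.2 hmin⟩
  cases m with
  | zero => simp
  | succ n =>
    rw [Fin.sum_mul_by_parts, hfit.sum_sub_eq_zero, zero_mul, zero_add]
    exact sum_nonneg fun k _ =>
      hfit.sum_filter_le_sub_mul_sub_nonneg (Fin.castSucc_covBy_succ k) hf

/-- LPAV property lemma: if `ŷ` minimizes `∑ (v i - y i)²` over the set of vectors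
that are non-decreasing and Lipschitz with respect to the sorted inputs `z`
(i.e. `0 ≤ v j - v i ≤ z j - z i` for `i ≤ j`), and `f` is expansive
(`f β - f α ≥ β - α` for `β ≥ α`), then `∑ (y i - ŷ i)(f (ŷ i) - z i) ≥ 0`. -/
theorem stmt4 {m : ℕ} (z y yhat : Fin m → ℝ)
    (hz : Monotone z) (hy : ∀ i, y i ∈ Set.Icc (0 : ℝ) 1)
    (hfeas : ∀ i j : Fin m, i ≤ j → yhat i ≤ yhat j ∧ yhat j - yhat i ≤ z j - z i)
    (hmin : ∀ v : Fin m → ℝ,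
      (∀ i j : Fin m, i ≤ j → v i ≤ v j ∧ v j - v i ≤ z j - z i) →
      ∑ i, (yhat i - y i) ^ 2 ≤ ∑ i, (v i - y i) ^ 2)
    (f : ℝ → ℝ) (hf : ∀ α β : ℝ, α ≤ β → β - α ≤ f β - f α) :
    0 ≤ ∑ i, (y i - yhat i) * (f (yhat i) - z i) :=
  stmt4_general z y yhat hfeas hmin f hf
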